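/- arXiv:2101.03096 — 2 statements merged into one kernel-verified Lean document; each statement's English description precedes it below -/
import Mathlib

section
/- Let z : [0,T] → [0,∞) be continuous and satisfy z_t ≤ z₀ + λ ∫₀ᵗ γ(z_s) ds with z₀ ∈ [0, exp(1 - 2e^{λT})]. Then z_t ≤ e · z₀^{exp(-λ t)} for all t ∈ [0,T]; in particular, if z₀ = 0 then z ≡ 0 on [0,T]. -/
/-! For `b > 0` the function `y(t) = exp (1 - (1 - log b) e^{-λt})` solves
`y' = λ y (1 - log y)` with `y(0) = b`, and `y (1 - log y) = γ(y)` as long as `y ≤ 1/e`, which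
holds up to time `t₀` when `b ≤ exp (1 - 2 e^{λ t₀})`. Since `γ` is continuous and monotone, a
first-crossing argument for the integral inequalities gives `z < y` whenever `z₀ < b`, and
`y(t) ≤ e · b^{e^{-λt}}`. Letting `b ↓ z₀` gives the bound for `t < T`, and continuity extends
it to `t = T`. -/

/-- The concave Osgood modulus `γ`: `γ(r) = r(1 - log r)` for `0 < r < 1/e`,
`γ(r) = r + 1/e` for `r ≥ 1/e`, and `γ(0) = 0` (extended by `0` for `r ≤ 0`). -/
noncomputable def gam (r : ℝ) : ℝ :=
  if r ≤ 0 then 0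
  else if r < (Real.exp 1)⁻¹ then r * (1 - Real.log r)
  else r + (Real.exp 1)⁻¹

open Real Set Filter Topology

lemma Real.monotoneOn_negMulLog : MonotoneOn negMulLog (Icc 0 (exp 1)⁻¹) := by
  refine monotoneOn_of_deriv_nonneg (convex_Icc _ _) continuous_negMulLog.continuousOn
    (differentiableOn_negMulLog.mono fun x hx => ?_) fun x hx => ?_ <;> rw [interior_Icc] at hx
  · exact mem_compl_singleton_iff.2 hx.1.ne'
  · have hlog : log x < -1 := by
      rw [← log_exp (-1), exp_neg]
      exact log_lt_log hx.1 hx.2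
    rw [deriv_negMulLog hx.1.ne']
    linarith

-- Past `1/e`, `γ` follows its tangent line `r + 1/e`, and `negMulLog (1/e) = 1/e`.
lemma gam_eq_max_add_negMulLog (r : ℝ) :
    gam r = max r 0 + negMulLog (min (max r 0) (exp 1)⁻¹) := by
  unfold gam
  split_ifs with h0 h1
  · simp [max_eq_right h0, min_eq_left (inv_pos.2 (exp_pos 1)).le]
  · rw [max_eq_left (not_le.1 h0).le, min_eq_left h1.le, negMulLog]
    ring
  · rw [max_eq_left (not_le.1 h0).le, min_eq_right (not_lt.1 h1), negMulLog, log_inv, log_exp]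
    ring

lemma continuous_gam : Continuous gam := by
  simp_rw [funext gam_eq_max_add_negMulLog]
  fun_prop

lemma monotone_gam : Monotone gam := by
  intro a b hab
  simp only [gam_eq_max_add_negMulLog]
  have hmax : max a 0 ≤ max b 0 := max_le_max_right 0 hab
  gcongr ?_ + ?_
  exact monotoneOn_negMulLog ⟨le_min (le_max_right _ _) (by positivity), min_le_right _ _⟩
    ⟨le_min (le_max_right _ _) (by positivity), min_le_right _ _⟩ (min_le_min_right _ hmax)

lemma gam_eq_add_negMulLog {r : ℝ} (h0 : 0 ≤ r) (h1 : r ≤ (exp 1)⁻¹) :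
    gam r = r + negMulLog r := by
  rw [gam_eq_max_add_negMulLog, max_eq_left h0, min_eq_left h1]

theorem lt_of_le_add_integral_of_add_integral_le {g z y : ℝ → ℝ} {z₀ b t₀ : ℝ}
    (hg : Continuous g) (hg_mono : Monotone g)
    (hz : ContinuousOn z (Icc 0 t₀)) (hy : ContinuousOn y (Icc 0 t₀)) (hzb : z₀ < b)
    (hz_le : ∀ t ∈ Icc 0 t₀, z t ≤ z₀ + ∫ s in (0 : ℝ)..t, g (z s))
    (hy_ge : ∀ t ∈ Icc 0 t₀, b + ∫ s in (0 : ℝ)..t, g (y s) ≤ y t) :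
    ∀ t ∈ Icc 0 t₀, z t < y t := by
  by_contra! ⟨t₁, ht₁, hyz₁⟩
  set S := {t ∈ Icc 0 t₀ | y t ≤ z t}
  have hS_bdd : BddBelow S := ⟨0, fun t ht => ht.1.1⟩
  obtain ⟨⟨hts₀, hts⟩, hyz⟩ : sInf S ∈ S :=
    (isClosed_Icc.isClosed_le hy hz).csInf_mem ⟨t₁, ht₁, hyz₁⟩ hS_bdd
  set ts := sInf S
  have hsub : Icc 0 ts ⊆ Icc 0 t₀ := Icc_subset_Icc_right hts
  have hlt : ∀ s ∈ Ioo 0 ts, z s < y s := fun s hs => lt_of_not_ge fun h =>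
    (csInf_le hS_bdd ⟨hsub (Ioo_subset_Icc_self hs), h⟩).not_gt hs.2
  have hint : ∀ f, ContinuousOn f (Icc 0 t₀) →
      IntervalIntegrable (fun s => g (f s)) MeasureTheory.volume 0 ts :=
    fun f hf => (hg.comp_continuousOn (hf.mono hsub)).intervalIntegrable_of_Icc hts₀
  have hmono : ∫ s in (0 : ℝ)..ts, g (z s) ≤ ∫ s in (0 : ℝ)..ts, g (y s) :=
    intervalIntegral.integral_mono_on_of_le_Ioo hts₀ (hint z hz) (hint y hy)
      fun s hs => hg_mono (hlt s hs).le
  linarith [hz_le ts ⟨hts₀, hts⟩, hy_ge ts ⟨hts₀, hts⟩]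

noncomputable def osgoodSolution (lam b t : ℝ) : ℝ := exp (1 - (1 - log b) * exp (-lam * t))

section osgoodSolution

variable {lam b t₀ : ℝ}

lemma osgoodSolution_zero (hb : 0 < b) : osgoodSolution lam b 0 = b := by
  simp [osgoodSolution, exp_log hb]

lemma continuous_osgoodSolution : Continuous (osgoodSolution lam b) := by
  unfold osgoodSolution
  fun_prop

lemma hasDerivAt_osgoodSolution (t : ℝ) :
    HasDerivAt (osgoodSolution lam b)
      (lam * (osgoodSolution lam b t + negMulLog (osgoodSolution lam b t))) t := by
  refine ((((hasDerivAt_id t).const_mul (-lam)).exp.const_mul (1 - log b)).const_sub 1).exp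
    |>.congr_deriv ?_
  simp only [osgoodSolution, negMulLog, log_exp, id]
  ring

lemma osgoodSolution_le_inv_exp_one (hlam : 0 ≤ lam) (hb : 0 < b)
    (hbt : b ≤ exp (1 - 2 * exp (lam * t₀))) {s : ℝ} (hs : s ≤ t₀) :
    osgoodSolution lam b s ≤ (exp 1)⁻¹ := by
  have hlog : log b ≤ 1 - 2 * exp (lam * t₀) := (log_le_iff_le_exp hb).2 hbt
  have hgrowth : 1 ≤ exp (lam * t₀) * exp (-lam * s) := by
    rw [← exp_add]
    exact one_le_exp (by nlinarith)
  rw [osgoodSolution, ← exp_neg]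
  exact exp_le_exp.2 (by nlinarith [exp_pos (-lam * s)])

lemma osgoodSolution_eq_add_integral (hlam : 0 ≤ lam) (hb : 0 < b)
    (hbt : b ≤ exp (1 - 2 * exp (lam * t₀))) {t : ℝ} (ht : t ∈ Icc 0 t₀) :
    osgoodSolution lam b t = b + ∫ s in (0 : ℝ)..t, lam * gam (osgoodSolution lam b s) := by
  have hgam : EqOn (fun s => lam * gam (osgoodSolution lam b s))
      (fun s => lam * (osgoodSolution lam b s + negMulLog (osgoodSolution lam b s))) (uIcc 0 t) :=
    fun s hs => by
      rw [uIcc_of_le ht.1] at hs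
      dsimp only
      rw [gam_eq_add_negMulLog (r := osgoodSolution lam b s) (exp_pos _).le
        (osgoodSolution_le_inv_exp_one hlam hb hbt (hs.2.trans ht.2))]
  have hcont : Continuous fun s =>
      lam * (osgoodSolution lam b s + negMulLog (osgoodSolution lam b s)) := by
    have := continuous_osgoodSolution (lam := lam) (b := b)
    fun_prop
  rw [intervalIntegral.integral_congr hgam, intervalIntegral.integral_eq_sub_of_hasDerivAt
    (fun s _ => hasDerivAt_osgoodSolution s) (hcont.intervalIntegrable _ _), osgoodSolution_zero hb]
  ring

lemma osgoodSolution_le_exp_one_mul_rpow (hb : 0 < b) (t : ℝ) :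
    osgoodSolution lam b t ≤ exp 1 * b ^ exp (-lam * t) := by
  rw [rpow_def_of_pos hb, ← exp_add, osgoodSolution]
  exact exp_le_exp.2 (by nlinarith [exp_pos (-lam * t)])

variable {z : ℝ → ℝ} {z₀ : ℝ}

lemma lt_osgoodSolution (hlam : 0 ≤ lam) (hb : 0 < b) (hz₀b : z₀ < b)
    (hbt : b ≤ exp (1 - 2 * exp (lam * t₀))) (hcont : ContinuousOn z (Icc 0 t₀))
    (hz : ∀ t ∈ Icc 0 t₀, z t ≤ z₀ + lam * ∫ s in (0 : ℝ)..t, gam (z s)) :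
    ∀ t ∈ Icc 0 t₀, z t < osgoodSolution lam b t :=
  lt_of_le_add_integral_of_add_integral_le (g := fun r => lam * gam r)
    (continuous_const.mul continuous_gam) (monotone_gam.const_mul hlam) hcont
    continuous_osgoodSolution.continuousOn hz₀b
    (fun t ht => by rw [intervalIntegral.integral_const_mul]; exact hz t ht)
    (fun t ht => (osgoodSolution_eq_add_integral hlam hb hbt ht).ge)

lemma le_exp_one_mul_rpow_of_lt (hlam : 0 ≤ lam) (hz₀ : 0 ≤ z₀)
    (hz₀t : z₀ < exp (1 - 2 * exp (lam * t₀))) (hcont : ContinuousOn z (Icc 0 t₀))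
    (hz : ∀ t ∈ Icc 0 t₀, z t ≤ z₀ + lam * ∫ s in (0 : ℝ)..t, gam (z s)) :
    ∀ t ∈ Icc 0 t₀, z t ≤ exp 1 * z₀ ^ exp (-lam * t) := by
  intro t ht
  have hlim : Tendsto (fun b => exp 1 * b ^ exp (-lam * t)) (𝓝[>] z₀)
      (𝓝 (exp 1 * z₀ ^ exp (-lam * t))) :=
    (continuousAt_const.mul (continuousAt_rpow_const _ _ (Or.inr (exp_pos _).le))).tendsto.mono_left
      nhdsWithin_le_nhds
  refine ge_of_tendsto hlim ?_
  filter_upwards [Ioc_mem_nhdsGT hz₀t] with b ⟨hz₀b, hbt⟩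
  have hb : 0 < b := hz₀.trans_lt hz₀b
  exact (lt_osgoodSolution hlam hb hz₀b hbt hcont hz t ht).le.trans
    (osgoodSolution_le_exp_one_mul_rpow hb t)

end osgoodSolution

/-- Osgood-type Gronwall lemma: if `z : [0,T] → [0,∞)` is continuous and satisfies
`z_t ≤ z₀ + λ ∫₀ᵗ γ(z_s) ds` with `z₀ ∈ [0, exp(1 - 2 e^{λT})]`, then
`z_t ≤ e ⬝ z₀ ^ (exp (-λ t))` on `[0,T]`; in particular `z₀ = 0` forces `z ≡ 0`. -/
theorem osgood_gronwall (T lam z₀ : ℝ) (hT : 0 < T) (hlam : 0 < lam)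
    (hz₀ : z₀ ∈ Set.Icc 0 (Real.exp (1 - 2 * Real.exp (lam * T))))
    (z : ℝ → ℝ) (hcont : ContinuousOn z (Set.Icc 0 T))
    (hznn : ∀ t ∈ Set.Icc 0 T, 0 ≤ z t)
    (hz : ∀ t ∈ Set.Icc 0 T, z t ≤ z₀ + lam * ∫ s in (0 : ℝ)..t, gam (z s)) :
    (∀ t ∈ Set.Icc 0 T, z t ≤ Real.exp 1 * z₀ ^ Real.exp (-lam * t)) ∧
      (z₀ = 0 → ∀ t ∈ Set.Icc 0 T, z t = 0) := by
  have hbefore : ∀ t ∈ Ico 0 T, z t ≤ exp 1 * z₀ ^ exp (-lam * t) := fun t ht =>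
    have hexp : exp (lam * t) < exp (lam * T) := exp_lt_exp.2 (mul_lt_mul_of_pos_left ht.2 hlam)
    have hthreshold : z₀ < exp (1 - 2 * exp (lam * t)) :=
      hz₀.2.trans_lt (exp_lt_exp.2 (by linarith))
    le_exp_one_mul_rpow_of_lt hlam.le hz₀.1 hthreshold (hcont.mono (Icc_subset_Icc_right ht.2.le))
      (fun s hs => hz s ⟨hs.1, hs.2.trans ht.2.le⟩) t ⟨ht.1, le_rfl⟩
  have hrhs : Continuous fun t => exp 1 * z₀ ^ exp (-lam * t) :=
    continuous_const.mul (continuous_const.rpow (by fun_prop) fun t => Or.inr (exp_pos _))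
  have hclosure : closure (Ico 0 T) = Icc 0 T := closure_Ico hT.ne
  have hbound : ∀ t ∈ Icc 0 T, z t ≤ exp 1 * z₀ ^ exp (-lam * t) := fun t ht =>
    le_on_closure hbefore (hclosure ▸ hcont) hrhs.continuousOn (hclosure ▸ ht)
  refine ⟨hbound, fun h0 t ht => le_antisymm ?_ (hznn t ht)⟩
  simpa [h0, zero_rpow (exp_pos _).ne'] using hbound t ht
end

section
/- Let φ, φ' : 𝕋² → 𝕋² be Lebesgue-measure-preserving measurable maps, let ξ₀ ∈ L^∞(𝕋²), and let K be the Biot–Savart kernel. Then ∫_{𝕋²} | ∫_{𝕋²} (K(φ(x) - φ(y)) - K(φ(x) - φ'(y))) ξ₀(y) dy | dx ≤ C ‖ξ₀‖_{L^∞} γ( ∫_{𝕋²} |φ(y) - φ'(y)| dy ), where C is the constant from the log-Lipschitz estimate for K and γ is the concave Osgood modulus. -/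
open MeasureTheory

/-- The flat two-dimensional torus `𝕋² = ℝ²/ℤ²`. -/
abbrev T2 : Type := AddCircle (1 : ℝ) × AddCircle (1 : ℝ)

/-! Bound `|ξ₀|` by `M` and swap the integrals. For fixed `y`, the substitution `z = φ x`
(`φ` preserves measure) followed by `z ↦ -z` turns the inner integral into the log-Lipschitz
estimate for `K`, so it is at most `C γ(|φ y - φ' y|)`. Since `𝕋²` has total mass one and `γ` is
concave, Jensen's inequality moves `γ` outside the remaining integral. -/

open Real Function

lemma mul_one_sub_log_le_tangent {a r : ℝ} (ha : 0 < a) (hr : 0 ≤ r) :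
    r * (1 - log r) ≤ a * (1 - log a) - log a * (r - a) := by
  rcases hr.eq_or_lt with rfl | hr
  · simp only [log_zero, sub_zero, mul_one, zero_sub]
    linarith
  have hlog : 1 - a / r ≤ log r - log a := by
    simpa [log_div hr.ne' ha.ne'] using one_sub_inv_le_log_of_pos (div_pos hr ha)
  have key : r - a ≤ r * (log r - log a) := by
    calc r - a = r * (1 - a / r) := by field_simp
      _ ≤ r * (log r - log a) := mul_le_mul_of_nonneg_left hlog hr.le
  linarith

lemma mul_one_sub_log_le_add {r : ℝ} (hr : 0 ≤ r) : r * (1 - log r) ≤ r + (exp 1)⁻¹ := by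
  have h := mul_one_sub_log_le_tangent (inv_pos.2 (exp_pos 1)) hr
  rw [log_inv, log_exp] at h
  linarith

lemma gam_of_le {r : ℝ} (h0 : 0 ≤ r) (h1 : r ≤ (exp 1)⁻¹) : gam r = r * (1 - log r) := by
  unfold gam
  split_ifs with hr0 hr1
  · simp [le_antisymm hr0 h0]
  · rfl
  · rw [le_antisymm h1 (not_lt.1 hr1), log_inv, log_exp]
    ring

lemma gam_of_ge {r : ℝ} (h : (exp 1)⁻¹ ≤ r) : gam r = r + (exp 1)⁻¹ := by
  have hr : 0 < r := (inv_pos.2 (exp_pos 1)).trans_le h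
  simp [gam, not_le.2 hr, not_lt.2 h]

lemma gam_nonneg (r : ℝ) : 0 ≤ gam r := by
  unfold gam
  split_ifs with hr0 hr1
  · exact le_rfl
  · have hlog : log r ≤ 0 :=
      log_nonpos (not_le.1 hr0).le (hr1.le.trans (inv_le_one_of_one_le₀ (one_le_exp zero_le_one)))
    nlinarith
  · have : 0 < r := (inv_pos.2 (exp_pos 1)).trans_le (not_lt.1 hr1)
    positivity

lemma gam_le_add {r : ℝ} (hr : 0 ≤ r) : gam r ≤ r + (exp 1)⁻¹ := by
  rcases le_total r (exp 1)⁻¹ with h | h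
  · exact (gam_of_le hr h).trans_le (mul_one_sub_log_le_add hr)
  · exact (gam_of_ge h).le

lemma measurable_gam : Measurable gam := by
  unfold gam
  exact Measurable.ite measurableSet_Iic measurable_const
    (Measurable.ite measurableSet_Iio (by fun_prop) (by fun_prop))

lemma exists_gam_le_affine {a : ℝ} (ha : 0 < a) :
    ∃ s : ℝ, ∀ r, 0 ≤ r → gam r ≤ gam a + s * (r - a) := by
  rcases le_total (exp 1)⁻¹ a with hae | hae
  · refine ⟨1, fun r hr => ?_⟩
    rw [gam_of_ge hae]
    linarith [gam_le_add hr]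
  refine ⟨-log a, fun r hr => ?_⟩
  rw [gam_of_le ha.le hae]
  rcases le_total r (exp 1)⁻¹ with hre | hre
  · rw [gam_of_le hr hre]
    linarith [mul_one_sub_log_le_tangent ha hr]
  · -- past `e⁻¹`, `gam` has slope `1 ≤ -log a`, so it stays below the tangent at `a`
    have hslope : 1 ≤ -log a := by
      have := log_le_log ha hae
      rw [log_inv, log_exp] at this
      linarith
    have htan := mul_one_sub_log_le_tangent ha (inv_pos.2 (exp_pos 1)).le
    rw [log_inv, log_exp] at htan
    rw [gam_of_ge hre]
    nlinarith

section Jensen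

variable {α : Type*} [MeasurableSpace α] {μ : Measure α}

lemma integral_comp_le_of_le_affine [IsProbabilityMeasure μ] {f : α → ℝ} {g : ℝ → ℝ}
    (hf : Integrable f μ) (hgf : Integrable (fun x => g (f x)) μ) {s : ℝ}
    (hle : ∀ x, g (f x) ≤ g (∫ y, f y ∂μ) + s * (f x - ∫ y, f y ∂μ)) :
    ∫ x, g (f x) ∂μ ≤ g (∫ x, f x ∂μ) := by
  set m := ∫ y, f y ∂μ
  have hlin : Integrable (fun x => s * (f x - m)) μ := (hf.sub (integrable_const m)).const_mul s
  calc ∫ x, g (f x) ∂μ ≤ ∫ x, (g m + s * (f x - m)) ∂μ :=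
        integral_mono hgf ((integrable_const _).add hlin) hle
    _ = g m := by
        rw [integral_add (integrable_const _) hlin, integral_const_mul,
          integral_sub hf (integrable_const m)]
        simp [m]

lemma integrable_gam_comp [IsFiniteMeasure μ] {f : α → ℝ} (hf : Integrable f μ)
    (hf0 : ∀ x, 0 ≤ f x) : Integrable (fun x => gam (f x)) μ :=
  (hf.add (integrable_const (exp 1)⁻¹)).mono'
    (measurable_gam.comp_aemeasurable hf.aemeasurable).aestronglyMeasurable
    (ae_of_all _ fun x => by
      rw [norm_of_nonneg (gam_nonneg _)]
      exact gam_le_add (hf0 x))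

lemma integral_gam_le [IsProbabilityMeasure μ] {f : α → ℝ} (hf : Integrable f μ)
    (hf0 : ∀ x, 0 ≤ f x) : ∫ x, gam (f x) ∂μ ≤ gam (∫ x, f x ∂μ) := by
  rcases (integral_nonneg (μ := μ) (f := f) hf0).eq_or_lt with hm | hm
  · have hf_ae : f =ᵐ[μ] 0 := (integral_eq_zero_iff_of_nonneg hf0 hf).1 hm.symm
    have hgam_ae : (fun x => gam (f x)) =ᵐ[μ] fun _ => gam 0 := hf_ae.fun_comp gam
    simp [← hm, integral_congr_ae hgam_ae]
  · obtain ⟨s, hs⟩ := exists_gam_le_affine hm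
    exact integral_comp_le_of_le_affine hf (integrable_gam_comp hf hf0) fun x => hs _ (hf0 x)

end Jensen

lemma MeasureTheory.MeasurePreserving.fst_sub_snd {α β G : Type*} [MeasurableSpace α]
    [MeasurableSpace β] [AddCommGroup G] [MeasurableSpace G] [MeasurableAdd₂ G] [MeasurableNeg G]
    {μ : Measure G} [IsProbabilityMeasure μ] [μ.IsAddRightInvariant] {μα : Measure α} {μβ : Measure β}
    [SFinite μα] [SFinite μβ] {φ : α → G} {ψ : β → G}
    (hφ : MeasurePreserving φ μα μ) (hψ : MeasurePreserving ψ μβ μ) :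
    MeasurePreserving (fun p : α × β => φ p.1 - ψ p.2) (μα.prod μβ) μ :=
  (measurePreserving_fst.comp (measurePreserving_sub_prod μ μ)).comp (hφ.prod hψ)

lemma integral_norm_sub_comp_le {α G E : Type*} [MeasurableSpace α] [SeminormedAddCommGroup G]
    [MeasurableSpace G] [MeasurableAdd G] [MeasurableNeg G] [NormedAddCommGroup E]
    {μ : Measure G} [μ.IsAddRightInvariant] [μ.IsNegInvariant]
    {ν : Measure α} {K : G → E} (hK : AEStronglyMeasurable K μ) {ω : ℝ → ℝ}
    (hKω : ∀ x x' : G, ∫ y, ‖K (x - y) - K (x' - y)‖ ∂μ ≤ ω (dist x x'))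
    {φ : α → G} (hφ : MeasurePreserving φ ν μ) (b b' : G) :
    ∫ x, ‖K (φ x - b) - K (φ x - b')‖ ∂ν ≤ ω (dist b b') := by
  have hmeas : AEStronglyMeasurable (fun z => ‖K (z - b) - K (z - b')‖) μ :=
    ((hK.comp_measurePreserving (measurePreserving_sub_right μ b)).sub
      (hK.comp_measurePreserving (measurePreserving_sub_right μ b'))).norm
  have hmap := integral_map hφ.aemeasurable (hφ.map_eq.symm ▸ hmeas)
  rw [hφ.map_eq] at hmap
  calc ∫ x, ‖K (φ x - b) - K (φ x - b')‖ ∂ν = ∫ z, ‖K (z - b) - K (z - b')‖ ∂μ := hmap.symm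
    _ = ∫ z, ‖K (-b - z) - K (-b' - z)‖ ∂μ := by
        rw [← integral_neg_eq_self (fun z => ‖K (-b - z) - K (-b' - z)‖)]
        simp only [sub_neg_eq_add, neg_add_eq_sub]
    _ ≤ ω (dist (-b) (-b')) := hKω _ _
    _ = ω (dist b b') := by rw [dist_neg_neg]

lemma integral_norm_integral_smul_le {α β E : Type*} [MeasurableSpace α] [MeasurableSpace β]
    [NormedAddCommGroup E] [NormedSpace ℝ E] {μα : Measure α} {μβ : Measure β} [SFinite μα]
    [SFinite μβ] {F : α → β → E} (hF : Integrable (uncurry F) (μα.prod μβ)) {ξ : β → ℝ}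
    {M : ℝ} (hM : ∀ y, |ξ y| ≤ M) :
    ∫ x, ‖∫ y, ξ y • F x y ∂μβ‖ ∂μα ≤ M * ∫ y, ∫ x, ‖F x y‖ ∂μα ∂μβ := by
  have hpointwise : ∀ᵐ x ∂μα, ‖∫ y, ξ y • F x y ∂μβ‖ ≤ M * ∫ y, ‖F x y‖ ∂μβ := by
    filter_upwards [hF.prod_right_ae] with x hx
    rw [← integral_const_mul]
    refine norm_integral_le_of_norm_le (hx.norm.const_mul M) (ae_of_all _ fun y => ?_)
    rw [norm_smul, Real.norm_eq_abs]
    exact mul_le_mul_of_nonneg_right (hM y) (norm_nonneg _)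
  calc ∫ x, ‖∫ y, ξ y • F x y ∂μβ‖ ∂μα ≤ ∫ x, M * ∫ y, ‖F x y‖ ∂μβ ∂μα :=
        integral_mono_of_nonneg (ae_of_all _ fun _ => norm_nonneg _)
          (hF.integral_norm_prod_left.const_mul M) hpointwise
    _ = M * ∫ y, ∫ x, ‖F x y‖ ∂μα ∂μβ := by
        rw [integral_const_mul, integral_integral_swap hF.norm]

instance : IsProbabilityMeasure (volume : Measure (AddCircle (1 : ℝ))) :=
  ⟨by simp [AddCircle.measure_univ]⟩

instance : (volume : Measure T2).IsAddHaarMeasure :=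
  Measure.prod.instIsAddHaarMeasure _ _

instance : (volume : Measure T2).IsNegInvariant :=
  Measure.IsAddHaarMeasure.isNegInvariant_of_innerRegular _

lemma integrable_dist_comp {α X : Type*} [MeasurableSpace α] {μ : Measure α} [IsFiniteMeasure μ]
    [PseudoMetricSpace X] [CompactSpace X] [MeasurableSpace X] [OpensMeasurableSpace X]
    {φ φ' : α → X} (hφ : Measurable φ) (hφ' : Measurable φ') :
    Integrable (fun y => dist (φ y) (φ' y)) μ :=
  Integrable.of_bound (hφ.dist hφ').aestronglyMeasurable (Metric.diam (Set.univ : Set X))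
    (ae_of_all _ fun y => by
      rw [norm_of_nonneg dist_nonneg]
      exact Metric.dist_le_diam_of_mem isCompact_univ.isBounded trivial trivial)

theorem kernel_difference_estimate_general (K : T2 → ℝ × ℝ) (hKint : Integrable K)
    (C : ℝ) (hC : 0 < C)
    (hK : ∀ x x' : T2, ∫ y : T2, ‖K (x - y) - K (x' - y)‖ ≤ C * gam (dist x x'))
    (ξ₀ : T2 → ℝ) (M : ℝ) (hM : ∀ y, |ξ₀ y| ≤ M)
    (φ φ' : T2 → T2)
    (hφ : MeasurePreserving φ (volume : Measure T2) volume)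
    (hφ' : MeasurePreserving φ' (volume : Measure T2) volume) :
    ∫ x : T2, ‖∫ y : T2, ξ₀ y • (K (φ x - φ y) - K (φ x - φ' y))‖
      ≤ C * M * gam (∫ y : T2, dist (φ y) (φ' y)) := by
  have hM0 : 0 ≤ M := (abs_nonneg _).trans (hM 0)
  have hdist : Integrable fun y => dist (φ y) (φ' y) :=
    integrable_dist_comp hφ.measurable hφ'.measurable
  have hD : Integrable (uncurry fun x y => K (φ x - φ y) - K (φ x - φ' y))
      ((volume : Measure T2).prod volume) :=
    ((hφ.fst_sub_snd hφ).integrable_comp_of_integrable hKint).sub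
      ((hφ.fst_sub_snd hφ').integrable_comp_of_integrable hKint)
  have hinner : ∀ y, ∫ x, ‖K (φ x - φ y) - K (φ x - φ' y)‖ ≤ C * gam (dist (φ y) (φ' y)) :=
    fun y => integral_norm_sub_comp_le (ω := fun r => C * gam r) hKint.aestronglyMeasurable hK hφ
      (φ y) (φ' y)
  calc ∫ x, ‖∫ y, ξ₀ y • (K (φ x - φ y) - K (φ x - φ' y))‖
      ≤ M * ∫ y, ∫ x, ‖K (φ x - φ y) - K (φ x - φ' y)‖ := integral_norm_integral_smul_le hD hM
    _ ≤ M * ∫ y, C * gam (dist (φ y) (φ' y)) := by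
        refine mul_le_mul_of_nonneg_left (integral_mono_of_nonneg ?_ ?_ (ae_of_all _ hinner)) hM0
        · exact ae_of_all _ fun y => integral_nonneg fun x => norm_nonneg _
        · exact (integrable_gam_comp hdist fun y => dist_nonneg).const_mul C
    _ ≤ M * (C * gam (∫ y, dist (φ y) (φ' y))) := by
        rw [integral_const_mul]
        gcongr
        exact integral_gam_le hdist fun y => dist_nonneg
    _ = C * M * gam (∫ y, dist (φ y) (φ' y)) := by ring

/-- If `φ, φ'` are measure-preserving maps of `𝕋²`, `ξ₀ ∈ L^∞(𝕋²)` and `K` is the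
Biot–Savart kernel (satisfying the log-Lipschitz estimate with constant `C` and
Osgood modulus `γ`), then
`∫ |∫ (K(φ(x)-φ(y)) - K(φ(x)-φ'(y))) ξ₀(y) dy| dx ≤ C ‖ξ₀‖_∞ γ(∫ |φ(y)-φ'(y)| dy)`. -/
theorem kernel_difference_estimate (K : T2 → ℝ × ℝ) (hKint : Integrable K)
    (C : ℝ) (hC : 0 < C)
    (hK : ∀ x x' : T2, ∫ y : T2, ‖K (x - y) - K (x' - y)‖ ≤ C * gam (dist x x'))
    (ξ₀ : T2 → ℝ) (hξmeas : Measurable ξ₀) (M : ℝ) (hM : ∀ y, |ξ₀ y| ≤ M)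
    (φ φ' : T2 → T2)
    (hφ : MeasurePreserving φ (volume : Measure T2) volume)
    (hφ' : MeasurePreserving φ' (volume : Measure T2) volume) :
    ∫ x : T2, ‖∫ y : T2, ξ₀ y • (K (φ x - φ y) - K (φ x - φ' y))‖
      ≤ C * M * gam (∫ y : T2, dist (φ y) (φ' y)) :=
  kernel_difference_estimate_general K hKint C hC hK ξ₀ M hM φ φ' hφ hφ'
end
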